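/- Correctness of the return-symbol derivative for general VPGs: for any return symbol b› ∈ Σ_r, (1) if δ_b›(S, [S₁, ‹a]) = (S', tail), then (S, [S₁, ‹a]·T) ⇝ b› w if and only if (S', T) ⇝ w; and (2) if δ_b›(S, None) = (S', λT.T) (the empty-stack case), then (S, ⊥) ⇝ b› w if and only if (S', ⊥) ⇝ w. -/

import Mathlib

namespace VPG

/-- Terminals of a visibly pushdown grammar: plain, call, and return symbols. -/
inductive VTerm (Pl Ca Re : Type) : Type
  | pl : Pl → VTerm Pl Ca Re
  | ca : Ca → VTerm Pl Ca Re
  | re : Re → VTerm Pl Ca Re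

/-- Grammar symbols: terminals or nonterminals. -/
inductive VSym (N Pl Ca Re : Type) : Type
  | t : VTerm Pl Ca Re → VSym N Pl Ca Re
  | nt : N → VSym N Pl Ca Re

/-- Production rules of a general VPG: `L → ε`, `L → i L₁`, or `L → ‹a L₁ b› L₂`. -/
inductive GRule (N Pl Ca Re : Type) : Type
  | eps (L : N)
  | lin (L : N) (i : VTerm Pl Ca Re) (L1 : N)
  | mat (L : N) (a : Ca) (L1 : N) (b : Re) (L2 : N)

variable {N Pl Ca Re : Type}

def GRule.lhs : GRule N Pl Ca Re → N
  | .eps L => L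
  | .lin L _ _ => L
  | .mat L _ _ _ _ => L

def GRule.rhs : GRule N Pl Ca Re → List (VSym N Pl Ca Re)
  | .eps _ => []
  | .lin _ i L1 => [.t i, .nt L1]
  | .mat _ a L1 b L2 => [.t (.ca a), .nt L1, .t (.re b), .nt L2]

/-- The well-formedness conditions of a general VPG with respect to the
partition `V = V⁰ ∪ V¹` (where `V0` is the set of well-matched nonterminals):
in `L → i L₁`, if `L ∈ V⁰` then `i` is a plain symbol and `L₁ ∈ V⁰`; in
`L → ‹a L₁ b› L₂`, `L₁ ∈ V⁰` and if `L ∈ V⁰` then `L₂ ∈ V⁰`. -/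
def GWellFormed (V0 : Set N) (P : Set (GRule N Pl Ca Re)) : Prop :=
  (∀ L i L1, GRule.lin L i L1 ∈ P → L ∈ V0 → (∃ c, i = VTerm.pl c) ∧ L1 ∈ V0) ∧
  (∀ L a L1 b L2, GRule.mat L a L1 b L2 ∈ P → L1 ∈ V0 ∧ (L ∈ V0 → L2 ∈ V0))

/-- One derivation step of the context-free derivation relation. -/
inductive Derives1 (P : Set (GRule N Pl Ca Re)) :
    List (VSym N Pl Ca Re) → List (VSym N Pl Ca Re) → Prop
  | step (r : GRule N Pl Ca Re) (hr : r ∈ P) (pre post : List (VSym N Pl Ca Re)) :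
      Derives1 P (pre ++ VSym.nt r.lhs :: post) (pre ++ r.rhs ++ post)

/-- The usual (reflexive-transitive) context-free derivation relation. -/
def Derives (P : Set (GRule N Pl Ca Re)) :
    List (VSym N Pl Ca Re) → List (VSym N Pl Ca Re) → Prop :=
  Relation.ReflTransGen (Derives1 P)

/-- `L →* w` for a terminal string `w`. -/
def DerivesStr (P : Set (GRule N Pl Ca Re)) (L : N) (w : List (VTerm Pl Ca Re)) : Prop :=
  Derives P [VSym.nt L] (w.map VSym.t)

/-- Well-matched terminal strings: every call symbol is matched with a
corresponding return symbol and vice versa. -/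
inductive WellMatched : List (VTerm Pl Ca Re) → Prop
  | nil : WellMatched []
  | plain (c : Pl) {w : List (VTerm Pl Ca Re)} (h : WellMatched w) :
      WellMatched (VTerm.pl c :: w)
  | mat (a : Ca) (b : Re) {w1 w2 : List (VTerm Pl Ca Re)}
      (h1 : WellMatched w1) (h2 : WellMatched w2) :
      WellMatched (VTerm.ca a :: w1 ++ VTerm.re b :: w2)

/-- Terminal strings in which every return symbol is matched with a call
symbol, while call symbols may be pending. -/
inductive MatchedRets : List (VTerm Pl Ca Re) → Prop
  | nil : MatchedRets []
  | plain (c : Pl) {w : List (VTerm Pl Ca Re)} (h : MatchedRets w) :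
      MatchedRets (VTerm.pl c :: w)
  | callPend (a : Ca) {w : List (VTerm Pl Ca Re)} (h : MatchedRets w) :
      MatchedRets (VTerm.ca a :: w)
  | mat (a : Ca) (b : Re) {w1 w2 : List (VTerm Pl Ca Re)}
      (h1 : WellMatched w1) (h2 : MatchedRets w2) :
      MatchedRets (VTerm.ca a :: w1 ++ VTerm.re b :: w2)

/-- A PDA state: a set of pairs of nonterminals. -/
abbrev PState (N : Type) := Set (N × N)

/-- A PDA stack: a list of stack symbols `[S, ‹a]` (`[]` is the empty stack `⊥`). -/
abbrev PStack (N Ca : Type) := List (PState N × Ca)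

/-- Acceptance `(S, T) ⇝ w` of a terminal string by a configuration,
for general VPGs. -/
inductive GAccepts (P : Set (GRule N Pl Ca Re)) :
    PState N → PStack N Ca → List (VTerm Pl Ca Re) → Prop
  | bot {S : PState N} {w : List (VTerm Pl Ca Re)} (L1 L2 : N)
      (h : (L1, L2) ∈ S) (hd : DerivesStr P L2 w) :
      GAccepts P S [] w
  | mat {S S' : PState N} {a : Ca} {T' : PStack N Ca}
      {w1 w2 : List (VTerm Pl Ca Re)} (b : Re) (L1 L2 L3 L4 L5 : N)
      (h34 : (L3, L4) ∈ S) (hd : DerivesStr P L4 w1) (hwm : WellMatched w1)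
      (h12 : (L1, L2) ∈ S') (hrule : GRule.mat L2 a L3 b L5 ∈ P)
      (hrec : GAccepts P {(L1, L5)} T' w2) :
      GAccepts P S ((S', a) :: T') (w1 ++ VTerm.re b :: w2)
  | matPend {S S' : PState N} {a : Ca} {T' : PStack N Ca}
      {w1 w2 : List (VTerm Pl Ca Re)} (b : Re) (L1 L2 L3 L4 L5 : N)
      (h34 : (L3, L4) ∈ S)
      (hd : Derives P [VSym.nt L4] (w1.map VSym.t ++ [VSym.t (VTerm.re b), VSym.nt L5]))
      (hwm : WellMatched w1)
      (h12 : (L1, L2) ∈ S') (hrule : GRule.lin L2 (VTerm.ca a) L3 ∈ P)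
      (hrec : GAccepts P {(L1, L5)} T' w2) :
      GAccepts P S ((S', a) :: T') (w1 ++ VTerm.re b :: w2)
  | pend {S S' : PState N} {a : Ca} {T' : PStack N Ca}
      {w1 : List (VTerm Pl Ca Re)} (L1 L2 L3 L4 : N)
      (h34 : (L3, L4) ∈ S) (hd : DerivesStr P L4 w1) (hmr : MatchedRets w1)
      (h12 : (L1, L2) ∈ S') (hrule : GRule.lin L2 (VTerm.ca a) L3 ∈ P) :
      GAccepts P S ((S', a) :: T') w1

/-- The derivative function for a plain symbol `c` (state part). -/
def gDeltaPlain (P : Set (GRule N Pl Ca Re)) (c : Pl) (S : PState N) : PState N :=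
  { q | ∃ L2, (q.1, L2) ∈ S ∧ GRule.lin L2 (VTerm.pl c) q.2 ∈ P }

/-- The derivative function for a call symbol `‹a` (state part): `S' ∪ S_p`. -/
def gDeltaCall (P : Set (GRule N Pl Ca Re)) (a : Ca) (S : PState N) : PState N :=
  { q | ∃ L1 L2 L3 L4 b, q = (L3, L3) ∧ (L1, L2) ∈ S ∧ GRule.mat L2 a L3 b L4 ∈ P } ∪
  { q | ∃ L1 L2 L3, q = (L3, L3) ∧ (L1, L2) ∈ S ∧ GRule.lin L2 (VTerm.ca a) L3 ∈ P }

/-- The derivative function for a return symbol `b›` with stack top `[S1, ‹a]`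
(state part): `S' ∪ S_p1`. -/
def gDeltaRetTop (P : Set (GRule N Pl Ca Re)) (b : Re) (S S1 : PState N) (a : Ca) :
    PState N :=
  { q | ∃ L1 L2 L3 L4 L5, q = (L1, L5) ∧ (L1, L2) ∈ S1 ∧ (L3, L4) ∈ S ∧
      GRule.eps L4 ∈ P ∧ GRule.mat L2 a L3 b L5 ∈ P } ∪
  { q | ∃ L1 L2 L3 L4 L5, q = (L1, L5) ∧ (L1, L2) ∈ S1 ∧ (L3, L4) ∈ S ∧
      GRule.lin L2 (VTerm.ca a) L3 ∈ P ∧ GRule.lin L4 (VTerm.re b) L5 ∈ P }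

/-- The derivative function for a return symbol `b›` with empty stack
(state part): `S_p2`. -/
def gDeltaRetEmpty (P : Set (GRule N Pl Ca Re)) (b : Re) (S : PState N) : PState N :=
  { q | ∃ L1 L2 L3, q = (L3, L3) ∧ (L1, L2) ∈ S ∧ GRule.lin L2 (VTerm.re b) L3 ∈ P }

/-- One transition of the general-VPG recognizer PDA (derivative transition). -/
def gStep (P : Set (GRule N Pl Ca Re)) (cfg : PState N × PStack N Ca)
    (i : VTerm Pl Ca Re) : PState N × PStack N Ca :=
  match i, cfg with
  | .pl c, (S, T) => (gDeltaPlain P c S, T)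
  | .ca a, (S, T) => (gDeltaCall P a S, (S, a) :: T)
  | .re b, (S, (S1, a) :: T) => (gDeltaRetTop P b S S1 a, T)
  | .re b, (S, []) => (gDeltaRetEmpty P b S, [])

/-- Running the general-VPG recognizer PDA on an input string. -/
def gRun (P : Set (GRule N Pl Ca Re)) :
    List (VTerm Pl Ca Re) → PState N × PStack N Ca → PState N × PStack N Ca
  | [], cfg => cfg
  | i :: w, cfg => gRun P w (gStep P cfg i)

/-- An acceptance configuration for strings with pending calls/returns. -/
def GAccConfig (P : Set (GRule N Pl Ca Re)) (cfg : PState N × PStack N Ca) : Prop :=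
  (∃ L1 L2, (L1, L2) ∈ cfg.1 ∧ GRule.eps L2 ∈ P) ∧
  (cfg.2 = [] ∨
    ∃ S' a T', cfg.2 = (S', a) :: T' ∧
      ∃ L3 L4 L', (L3, L4) ∈ S' ∧ GRule.lin L4 (VTerm.ca a) L' ∈ P)

/-- Acceptance of a string by the general-VPG recognizer PDA. -/
def GPDAAccepts (P : Set (GRule N Pl Ca Re)) (L0 : N) (w : List (VTerm Pl Ca Re)) : Prop :=
  GAccConfig P (gRun P w (({(L0, L0)} : PState N), ([] : PStack N Ca)))


section Aux

variable {P : Set (GRule N Pl Ca Re)}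

lemma derives1_inv {u v : List (VSym N Pl Ca Re)} (h : Derives1 P u v) :
    ∃ r ∈ P, ∃ pre post, u = pre ++ VSym.nt r.lhs :: post ∧ v = pre ++ r.rhs ++ post := by
  cases h with
  | step r hr pre post => exact ⟨r, hr, pre, post, rfl, rfl⟩

lemma derives_nil {v : List (VSym N Pl Ca Re)} (h : Derives P [] v) : v = [] := by
  rcases h.cases_head with h | ⟨c, h1, _⟩
  · exact h.symm
  · obtain ⟨r, _, pre, post, hu, _⟩ := derives1_inv h1
    exact absurd hu.symm (by simp)

lemma derives_cons_t :
    ∀ {s v : List (VSym N Pl Ca Re)}, Derives P s v →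
    ∀ {i : VTerm Pl Ca Re} {u : List (VSym N Pl Ca Re)}, s = VSym.t i :: u →
      ∃ v', v = VSym.t i :: v' ∧ Derives P u v' := by
  intro s v h
  induction h using Relation.ReflTransGen.head_induction_on with
  | refl => intro i u hs; exact ⟨u, hs, Relation.ReflTransGen.refl⟩
  | head h1 h2 ih =>
    intro i u hs
    obtain ⟨r, hr, pre, post, hu, hc⟩ := derives1_inv h1
    subst hs
    cases pre with
    | nil => simp at hu
    | cons p0 pre' =>
      rw [List.cons_append] at hu
      obtain ⟨hp0, hu'⟩ := List.cons.inj hu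
      obtain ⟨v', hv', hd'⟩ := ih (i := i) (u := pre' ++ r.rhs ++ post)
        (by rw [hc, ← hp0]; simp)
      refine ⟨v', hv', ?_⟩
      exact Relation.ReflTransGen.head (by rw [hu']; exact Derives1.step r hr pre' post) hd'

lemma derives_nt_inv {L : N} {v : List (VSym N Pl Ca Re)}
    (h : Derives P [VSym.nt L] v) :
    v = [VSym.nt L] ∨ ∃ r ∈ P, GRule.lhs r = L ∧ Derives P r.rhs v := by
  rcases h.cases_head with h | ⟨c, h1, h2⟩
  · exact Or.inl h.symm
  · obtain ⟨r, hr, pre, post, hu, hc⟩ := derives1_inv h1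
    cases pre with
    | nil =>
      simp only [List.nil_append] at hu hc
      obtain ⟨hl, hpost⟩ := List.cons.inj hu
      subst hpost
      refine Or.inr ⟨r, hr, by injection hl.symm, ?_⟩
      simpa [hc, Derives] using h2
    | cons p0 pre' =>
      exfalso
      have := congrArg List.length hu
      simp at this

lemma eps_of_derives_nil {L : N} (h : Derives P [VSym.nt L] []) : GRule.eps L ∈ P := by
  rcases derives_nt_inv h with h | ⟨r, hr, hl, hd⟩
  · simp at h
  · cases r with
    | eps L' => cases hl; exact hr
    | lin L' i L1 =>
      obtain ⟨v', hv', _⟩ := derives_cons_t hd (rfl : GRule.rhs (GRule.lin L' i L1) = _)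
      simp at hv'
    | mat L' a' L1 b' L2 =>
      obtain ⟨v', hv', _⟩ := derives_cons_t hd (rfl : GRule.rhs (GRule.mat L' a' L1 b' L2) = _)
      simp at hv'

lemma ret_head_inv {L : N} {b : Re} {rest : List (VSym N Pl Ca Re)}
    (h : Derives P [VSym.nt L] (VSym.t (VTerm.re b) :: rest)) :
    ∃ L1, GRule.lin L (VTerm.re b) L1 ∈ P ∧ Derives P [VSym.nt L1] rest := by
  rcases derives_nt_inv h with h | ⟨r, hr, hl, hd⟩
  · simp at h
  · cases r with
    | eps L' => exact absurd (derives_nil hd) (by simp)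
    | lin L' i L1 =>
      obtain ⟨v', hv', hd'⟩ := derives_cons_t hd (rfl : GRule.rhs (GRule.lin L' i L1) = _)
      obtain ⟨hi, hv⟩ := List.cons.inj hv'
      cases hl
      have hi' : i = VTerm.re b := by injection hi with h; exact h.symm
      subst hi' hv
      exact ⟨L1, hr, hd'⟩
    | mat L' a' L1 b' L2 =>
      obtain ⟨v', hv', _⟩ := derives_cons_t hd (rfl : GRule.rhs (GRule.mat L' a' L1 b' L2) = _)
      obtain ⟨hi, _⟩ := List.cons.inj hv'
      exact absurd hi (by simp)

lemma nt_to_nt {L L' : N} (h : Derives P [VSym.nt L] [VSym.nt L']) : L = L' := by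
  rcases derives_nt_inv h with h | ⟨r, hr, hl, hd⟩
  · injection (List.cons.inj h).1 with h'; exact h'.symm
  · cases r with
    | eps _ => exact absurd (derives_nil hd) (by simp)
    | lin L'' i L1 =>
      obtain ⟨v', hv', _⟩ := derives_cons_t hd (rfl : GRule.rhs (GRule.lin L'' i L1) = _)
      exact absurd (List.cons.inj hv').1 (by simp)
    | mat L'' a' L1 b' L2 =>
      obtain ⟨v', hv', _⟩ := derives_cons_t hd (rfl : GRule.rhs (GRule.mat L'' a' L1 b' L2) = _)
      exact absurd (List.cons.inj hv').1 (by simp)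

lemma lin_ret_of_derives {L L5 : N} {b : Re}
    (h : Derives P [VSym.nt L] [VSym.t (VTerm.re b), VSym.nt L5]) :
    GRule.lin L (VTerm.re b) L5 ∈ P := by
  obtain ⟨L1, hr, hd⟩ := ret_head_inv h
  exact nt_to_nt hd ▸ hr

lemma wm_not_re {b : Re} {w : List (VTerm Pl Ca Re)}
    (h : WellMatched (VTerm.re b :: w)) : False := by
  generalize hw : VTerm.re b :: w = w' at h
  cases h <;> simp_all

lemma mr_not_re {b : Re} {w : List (VTerm Pl Ca Re)}
    (h : MatchedRets (VTerm.re b :: w)) : False := by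
  generalize hw : VTerm.re b :: w = w' at h
  cases h <;> simp_all

lemma gAccepts_mono {S S' : PState N} {T : PStack N Ca} {w : List (VTerm Pl Ca Re)}
    (hsub : S ⊆ S') (h : GAccepts P S T w) : GAccepts P S' T w := by
  cases h with
  | bot L1 L2 h hd => exact .bot L1 L2 (hsub h) hd
  | mat b L1 L2 L3 L4 L5 h34 hd hwm h12 hrule hrec =>
    exact .mat b L1 L2 L3 L4 L5 (hsub h34) hd hwm h12 hrule hrec
  | matPend b L1 L2 L3 L4 L5 h34 hd hwm h12 hrule hrec =>
    exact .matPend b L1 L2 L3 L4 L5 (hsub h34) hd hwm h12 hrule hrec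
  | pend L1 L2 L3 L4 h34 hd hmr h12 hrule =>
    exact .pend L1 L2 L3 L4 (hsub h34) hd hmr h12 hrule

lemma gAccepts_exists_pair {S : PState N} {T : PStack N Ca} {w : List (VTerm Pl Ca Re)}
    (h : GAccepts P S T w) : ∃ p ∈ S, GAccepts P {p} T w := by
  cases h with
  | bot L1 L2 h hd => exact ⟨(L1, L2), h, .bot L1 L2 rfl hd⟩
  | mat b L1 L2 L3 L4 L5 h34 hd hwm h12 hrule hrec =>
    exact ⟨(L3, L4), h34, .mat b L1 L2 L3 L4 L5 rfl hd hwm h12 hrule hrec⟩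
  | matPend b L1 L2 L3 L4 L5 h34 hd hwm h12 hrule hrec =>
    exact ⟨(L3, L4), h34, .matPend b L1 L2 L3 L4 L5 rfl hd hwm h12 hrule hrec⟩
  | pend L1 L2 L3 L4 h34 hd hmr h12 hrule =>
    exact ⟨(L3, L4), h34, .pend L1 L2 L3 L4 rfl hd hmr h12 hrule⟩

lemma derives1_context {u v : List (VSym N Pl Ca Re)} (l r : List (VSym N Pl Ca Re))
    (h : Derives1 P u v) : Derives1 P (l ++ u ++ r) (l ++ v ++ r) := by
  cases h with
  | step ru hru pre post =>
    have := Derives1.step (P := P) ru hru (l ++ pre) (post ++ r)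
    simpa [List.append_assoc] using this

lemma derives_context {u v : List (VSym N Pl Ca Re)} (l r : List (VSym N Pl Ca Re))
    (h : Derives P u v) : Derives P (l ++ u ++ r) (l ++ v ++ r) :=
  Relation.ReflTransGen.lift (fun x => l ++ x ++ r) (fun _ _ h => derives1_context l r h) _ _ h

lemma derives_single_rule {r : GRule N Pl Ca Re} (hr : r ∈ P) :
    Derives P [VSym.nt r.lhs] r.rhs := by
  have := Derives1.step (P := P) r hr [] []
  simpa [Derives] using Relation.ReflTransGen.single this

end Aux

/-- Correctness of the return-symbol derivative for general
VPGs: part (1) is the nonempty-stack case and part (2) is the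
empty-stack case. -/
theorem gDeltaRet_correct (P : Set (GRule N Pl Ca Re)) (V0 : Set N)
    (hwf : GWellFormed V0 P) (b : Re) (a : Ca) (S S1 : PState N)
    (T : PStack N Ca) (w : List (VTerm Pl Ca Re)) :
    (∀ S', S' = gDeltaRetTop P b S S1 a →
      (GAccepts P S ((S1, a) :: T) (VTerm.re b :: w) ↔ GAccepts P S' T w)) ∧
    (∀ S', S' = gDeltaRetEmpty P b S →
      (GAccepts P S ([] : PStack N Ca) (VTerm.re b :: w) ↔
        GAccepts P S' ([] : PStack N Ca) w)) := by
  constructor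
  · intro S' hS'
    subst hS'
    constructor
    · intro h
      generalize hT : ((S1, a) :: T : PStack N Ca) = T0 at h
      generalize hw0 : (VTerm.re b :: w) = w0 at h
      cases h with
      | bot L1 L2 hmem hd => simp at hT
      | mat b' L1 L2 L3 L4 L5 h34 hd hwm h12 hrule hrec =>
        obtain ⟨hS1a, hT'⟩ := List.cons.inj hT
        obtain ⟨hS1, ha⟩ := Prod.mk.inj hS1a
        subst hS1; subst ha; subst hT'
        rename_i w1 w2
        cases w1 with
        | nil =>
          simp only [List.nil_append] at hw0
          obtain ⟨hb, hw2⟩ := List.cons.inj hw0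
          have hb' : b = b' := by injection hb
          subst hb'; subst hw2
          have heps : GRule.eps L4 ∈ P := eps_of_derives_nil (by simpa [DerivesStr] using hd)
          exact gAccepts_mono (Set.singleton_subset_iff.2
            (Or.inl ⟨L1, L2, L3, L4, L5, rfl, h12, h34, heps, hrule⟩)) hrec
        | cons x w1' =>
          rw [List.cons_append] at hw0
          obtain ⟨hx, _⟩ := List.cons.inj hw0
          exact absurd hwm (by rw [← hx]; exact wm_not_re)
      | matPend b' L1 L2 L3 L4 L5 h34 hd hwm h12 hrule hrec =>
        obtain ⟨hS1a, hT'⟩ := List.cons.inj hT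
        obtain ⟨hS1, ha⟩ := Prod.mk.inj hS1a
        subst hS1; subst ha; subst hT'
        rename_i w1 w2
        cases w1 with
        | nil =>
          simp only [List.nil_append] at hw0
          obtain ⟨hb, hw2⟩ := List.cons.inj hw0
          have hb' : b = b' := by injection hb
          subst hb'; subst hw2
          have hlin4 : GRule.lin L4 (VTerm.re b) L5 ∈ P :=
            lin_ret_of_derives (by simpa using hd)
          exact gAccepts_mono (Set.singleton_subset_iff.2
            (Or.inr ⟨L1, L2, L3, L4, L5, rfl, h12, h34, hrule, hlin4⟩)) hrec
        | cons x w1' =>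
          rw [List.cons_append] at hw0
          obtain ⟨hx, _⟩ := List.cons.inj hw0
          exact absurd hwm (by rw [← hx]; exact wm_not_re)
      | pend L1 L2 L3 L4 h34 hd hmr h12 hrule =>
        subst hw0
        exact absurd hmr mr_not_re
    · intro h
      obtain ⟨⟨Lx, Ly⟩, hmem, hp⟩ := gAccepts_exists_pair h
      rcases hmem with ⟨L1, L2, L3, L4, L5, hq, h12, h34, heps, hrule⟩ |
        ⟨L1, L2, L3, L4, L5, hq, h12, h34, hrule1, hrule2⟩
      · rw [hq] at hp
        have hd4 : DerivesStr P L4 [] := by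
          simpa [DerivesStr, GRule.lhs, GRule.rhs] using derives_single_rule (P := P) heps
        have := GAccepts.mat (T' := T) (w1 := []) (w2 := w) b L1 L2 L3 L4 L5
          h34 hd4 WellMatched.nil h12 hrule hp
        simpa using this
      · rw [hq] at hp
        have hd4 : Derives P [VSym.nt L4]
            (([] : List (VTerm Pl Ca Re)).map VSym.t ++ [VSym.t (VTerm.re b), VSym.nt L5]) := by
          simpa [GRule.lhs, GRule.rhs] using derives_single_rule (P := P) hrule2
        have := GAccepts.matPend (T' := T) (w1 := []) (w2 := w) b L1 L2 L3 L4 L5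
          h34 hd4 WellMatched.nil h12 hrule1 hp
        simpa using this
  · intro S' hS'
    subst hS'
    constructor
    · intro h
      cases h with
      | bot L1 L2 hmem hd =>
        have hd' : Derives P [VSym.nt L2] (VSym.t (VTerm.re b) :: w.map VSym.t) := by
          simpa [DerivesStr] using hd
        obtain ⟨L3, hlin, hd3⟩ := ret_head_inv hd'
        exact GAccepts.bot L3 L3 ⟨L1, L2, L3, rfl, hmem, hlin⟩ hd3
    · intro h
      cases h with
      | bot Lx Ly hmem hd =>
        obtain ⟨L1, L2, L3, hq, hS, hlin⟩ := hmem
        obtain ⟨hx, hy⟩ := Prod.mk.inj hq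
        rw [hy] at hd
        refine GAccepts.bot L1 L2 hS ?_
        show Derives P [VSym.nt L2] ((VTerm.re b :: w).map VSym.t)
        have step1 : Derives P [VSym.nt L2] [VSym.t (VTerm.re b), VSym.nt L3] := by
          simpa [GRule.lhs, GRule.rhs] using derives_single_rule (P := P) hlin
        refine step1.trans ?_
        have := derives_context [VSym.t (VTerm.re b)] []
          (hd : Derives P [VSym.nt L3] (w.map VSym.t))
        simpa [Derives] using this

end VPG
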